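/- The constructors Var and Op on terms behave like free constructors: (1) every good term equals either Var xs x for some xs, x, or Op δ inp binp for some δ and inputs inp, binp with ↑good inp, ↑goodAbs binp, |dom inp| < |var| and |dom binp| < |var|, and every good abstraction equals Abs xs x X for some xs, x and good term X; (2) Var xs x = Var xs' x' implies xs = xs' and x = x'; (3) for good inputs of domain cardinality < |var|, Op δ inp binp = Op δ' inp' binp' implies δ = δ', inp = inp' and binp = binp'; (4) Var xs x never equals Op δ inp binp. -/

import Mathlib

open scoped Classical

universe u

section Binding

variable (var varsort index bindex opsym : Type u)

/-! ### Inputs -/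

/-- An `(α,β)`-input: a partial function from `α` to `β`. -/
abbrev Input (α β : Type u) : Type u := α → Option β

/-- The domain of an input. -/
def idom {α β : Type u} (inp : Input α β) : Set α := {a | inp a ≠ none}

/-- The componentwise lifting of a predicate to inputs. -/
def liftP {α β : Type u} (P : β → Prop) (inp : Input α β) : Prop :=
  ∀ a b, inp a = some b → P b

/-- The componentwise lifting of a function to inputs. -/
def liftF {α β γ : Type u} (f : β → γ) (inp : Input α β) : Input α γ :=
  fun a => (inp a).map f

/-- An input is small if its domain has cardinality smaller than that of `var`. -/
def smallDom {α β : Type u} (inp : Input α β) : Prop :=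
  Cardinal.mk (idom inp) < Cardinal.mk var

/-! ### Quasiterms -/

mutual
/-- Quasiterms: raw terms before quotienting by alpha-equivalence. -/
inductive QTerm : Type u where
  | qVar : varsort → var → QTerm
  | qOp : opsym → (index → Option QTerm) → (bindex → Option QAbs) → QTerm
/-- Quasiabstractions. -/
inductive QAbs : Type u where
  | qAbs : varsort → var → QTerm → QAbs
end

/-- Transposition of two variables. -/
noncomputable def swapVar (z1 z2 x : var) : var :=
  if x = z1 then z2 else if x = z2 then z1 else x

/-- Sort-aware transposition of variables (acts only on variables of varsort `zs`). -/
noncomputable def swapVarS (zs xs : varsort) (z1 z2 x : var) : var :=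
  if xs = zs then swapVar var z1 z2 x else x

variable {var varsort index bindex opsym}

/-- Swapping of the variables `z1`, `z2` at varsort `zs` in a quasiterm
(transposing them everywhere, including binding positions). -/
noncomputable def qSwap (z1 z2 : var) (zs : varsort) :
    QTerm var varsort index bindex opsym → QTerm var varsort index bindex opsym :=
  QTerm.rec (motive_1 := fun _ => QTerm var varsort index bindex opsym)
    (motive_2 := fun _ => QAbs var varsort index bindex opsym)
    (motive_3 := fun _ => Option (QTerm var varsort index bindex opsym))
    (motive_4 := fun _ => Option (QAbs var varsort index bindex opsym))
    (fun xs x => .qVar xs (swapVarS var varsort zs xs z1 z2 x))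
    (fun d _ _ rinp rbinp => .qOp d rinp rbinp)
    (fun xs x _ rX => .qAbs xs (swapVarS var varsort zs xs z1 z2 x) rX)
    none (fun _ r => some r) none (fun _ r => some r)

/-- Swapping of variables in a quasiabstraction. -/
noncomputable def qSwapAbs (z1 z2 : var) (zs : varsort) :
    QAbs var varsort index bindex opsym → QAbs var varsort index bindex opsym
  | .qAbs xs x X => .qAbs xs (swapVarS var varsort zs xs z1 z2 x) (qSwap z1 z2 zs X)

/-! ### Freshness and goodness -/

mutual
/-- `QFresh ys y X`: the variable `y` of varsort `ys` has no free occurrence in `X`. -/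
inductive QFresh : varsort → var → QTerm var varsort index bindex opsym → Prop where
  | qVar : ∀ {ys y xs x}, (ys, y) ≠ (xs, x) → QFresh ys y (.qVar xs x)
  | qOp : ∀ {ys y d inp binp}, (∀ i X, inp i = some X → QFresh ys y X) →
      (∀ j A, binp j = some A → QFreshAbs ys y A) → QFresh ys y (.qOp d inp binp)
/-- Freshness for quasiabstractions. -/
inductive QFreshAbs : varsort → var → QAbs var varsort index bindex opsym → Prop where
  | qAbs_bound : ∀ {xs x X}, QFreshAbs xs x (.qAbs xs x X)
  | qAbs_body : ∀ {ys y xs x X}, QFresh ys y X → QFreshAbs ys y (.qAbs xs x X)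
end

mutual
/-- Good quasiterms: all constructors branch less than `|var|`. -/
inductive QGood : QTerm var varsort index bindex opsym → Prop where
  | qVar : ∀ {xs x}, QGood (.qVar xs x)
  | qOp : ∀ {d inp binp}, (∀ i X, inp i = some X → QGood X) →
      (∀ j A, binp j = some A → QGoodAbs A) →
      smallDom var inp → smallDom var binp → QGood (.qOp d inp binp)
/-- Good quasiabstractions. -/
inductive QGoodAbs : QAbs var varsort index bindex opsym → Prop where
  | qAbs : ∀ {xs x X}, QGood X → QGoodAbs (.qAbs xs x X)
end

/-! ### Alpha-equivalence -/

mutual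
/-- Alpha-equivalence of quasiterms. -/
inductive Alpha : QTerm var varsort index bindex opsym →
    QTerm var varsort index bindex opsym → Prop where
  | qVar : ∀ {xs x}, Alpha (.qVar xs x) (.qVar xs x)
  | qOp : ∀ {d inp binp inp' binp'},
      (∀ i, inp i = none ↔ inp' i = none) →
      (∀ i X X', inp i = some X → inp' i = some X' → Alpha X X') →
      (∀ j, binp j = none ↔ binp' j = none) →
      (∀ j A A', binp j = some A → binp' j = some A' → AlphaAbs A A') →
      Alpha (.qOp d inp binp) (.qOp d inp' binp')
/-- Alpha-equivalence of quasiabstractions (the exists-fresh formulation). -/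
inductive AlphaAbs : QAbs var varsort index bindex opsym →
    QAbs var varsort index bindex opsym → Prop where
  | qAbs : ∀ {xs x x' X X' y}, y ∉ ({x, x'} : Set var) →
      QFresh xs y X → QFresh xs y X' →
      Alpha (qSwap y x xs X) (qSwap y x' xs X') →
      AlphaAbs (.qAbs xs x X) (.qAbs xs x' X')
end

/-! ### Terms and abstractions as quotients -/

variable (var varsort index bindex opsym)

/-- Terms: quasiterms modulo alpha-equivalence. -/
def Term : Type u := Quot (@Alpha var varsort index bindex opsym)

/-- Abstractions: quasiabstractions modulo alpha-equivalence. -/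
def Abstr : Type u := Quot (@AlphaAbs var varsort index bindex opsym)

variable {var varsort index bindex opsym}

/-- The projection from quasiterms to terms. -/
def tmk : QTerm var varsort index bindex opsym → Term var varsort index bindex opsym :=
  Quot.mk _

/-- The projection from quasiabstractions to abstractions. -/
def amk : QAbs var varsort index bindex opsym → Abstr var varsort index bindex opsym :=
  Quot.mk _

/-- A representative of a term. -/
noncomputable def trep (X : Term var varsort index bindex opsym) :
    QTerm var varsort index bindex opsym := Quot.out X

/-- A representative of an abstraction. -/
noncomputable def arep (A : Abstr var varsort index bindex opsym) :
    QAbs var varsort index bindex opsym := Quot.out A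

/-- Good terms. -/
def good (X : Term var varsort index bindex opsym) : Prop := QGood (trep X)

/-- Good abstractions. -/
def goodAbs (A : Abstr var varsort index bindex opsym) : Prop := QGoodAbs (arep A)

/-- The variable-injection constructor on terms. -/
def Var (xs : varsort) (x : var) : Term var varsort index bindex opsym :=
  tmk (.qVar xs x)

/-- The operation constructor on terms. -/
noncomputable def Op (d : opsym) (inp : Input index (Term var varsort index bindex opsym))
    (binp : Input bindex (Abstr var varsort index bindex opsym)) :
    Term var varsort index bindex opsym :=
  tmk (.qOp d (liftF trep inp) (liftF arep binp))

/-- The abstraction constructor. -/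
noncomputable def Abs (xs : varsort) (x : var) (X : Term var varsort index bindex opsym) :
    Abstr var varsort index bindex opsym :=
  amk (.qAbs xs x (trep X))

/-- Freshness on terms. -/
def fresh (ys : varsort) (y : var) (X : Term var varsort index bindex opsym) : Prop :=
  QFresh ys y (trep X)

/-- Freshness on abstractions. -/
def freshAbs (ys : varsort) (y : var) (A : Abstr var varsort index bindex opsym) : Prop :=
  QFreshAbs ys y (arep A)

/-- Swapping on terms. -/
noncomputable def tswap (X : Term var varsort index bindex opsym)
    (z1 z2 : var) (zs : varsort) : Term var varsort index bindex opsym :=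
  tmk (qSwap z1 z2 zs (trep X))

/-! ### Substitution -/

mutual
/-- The graph of capture-avoiding substitution on quasiterms:
`QSubst X Y y ys Z` means that `Z` is a result of substituting `Y` for the free
occurrences of the variable `y` of varsort `ys` in `X` (along a capture-free
representative). -/
inductive QSubst : QTerm var varsort index bindex opsym →
    QTerm var varsort index bindex opsym → var → varsort →
    QTerm var varsort index bindex opsym → Prop where
  | var_eq : ∀ {Y y ys}, QSubst (.qVar ys y) Y y ys Y
  | var_ne : ∀ {Y y ys xs x}, (xs, x) ≠ (ys, y) → QSubst (.qVar xs x) Y y ys (.qVar xs x)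
  | op : ∀ {Y y ys d inp binp inp' binp'},
      (∀ i, inp i = none ↔ inp' i = none) →
      (∀ i X X', inp i = some X → inp' i = some X' → QSubst X Y y ys X') →
      (∀ j, binp j = none ↔ binp' j = none) →
      (∀ j A A', binp j = some A → binp' j = some A' → QSubstAbs A Y y ys A') →
      QSubst (.qOp d inp binp) Y y ys (.qOp d inp' binp')
/-- The graph of capture-avoiding substitution on quasiabstractions. -/
inductive QSubstAbs : QAbs var varsort index bindex opsym →
    QTerm var varsort index bindex opsym → var → varsort →
    QAbs var varsort index bindex opsym → Prop where
  | abs : ∀ {Y y ys xs x X X'}, (xs, x) ≠ (ys, y) → QFresh xs x Y →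
      QSubst X Y y ys X' → QSubstAbs (.qAbs xs x X) Y y ys (.qAbs xs x X')
end

/-- The graph of capture-avoiding substitution on terms. -/
def SubstRel (X Y : Term var varsort index bindex opsym) (y : var) (ys : varsort)
    (Z : Term var varsort index bindex opsym) : Prop :=
  ∃ qX qZ, tmk qX = X ∧ tmk qZ = Z ∧ QSubst qX (trep Y) y ys qZ

/-- Capture-avoiding substitution on terms: `subst X Y y ys` is `X[Y/y]_ys`. -/
noncomputable def subst (X Y : Term var varsort index bindex opsym)
    (y : var) (ys : varsort) : Term var varsort index bindex opsym :=
  if h : ∃ Z, SubstRel X Y y ys Z then h.choose else X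

/-- The graph of capture-avoiding substitution on abstractions. -/
def SubstAbsRel (A : Abstr var varsort index bindex opsym)
    (Y : Term var varsort index bindex opsym) (y : var) (ys : varsort)
    (B : Abstr var varsort index bindex opsym) : Prop :=
  ∃ qA qB, amk qA = A ∧ amk qB = B ∧ QSubstAbs qA (trep Y) y ys qB

/-- Capture-avoiding substitution on abstractions: `substAbs A Y y ys` is `A[Y/y]_ys`. -/
noncomputable def substAbs (A : Abstr var varsort index bindex opsym)
    (Y : Term var varsort index bindex opsym) (y : var) (ys : varsort) :
    Abstr var varsort index bindex opsym :=
  if h : ∃ B, SubstAbsRel A Y y ys B then h.choose else A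

/-! ### Parallel substitution -/

mutual
/-- The graph of capture-avoiding parallel substitution on quasiterms, along an
assignment `ρ : varsort → var → Option qterm`. -/
inductive QPSubst : QTerm var varsort index bindex opsym →
    (varsort → var → Option (QTerm var varsort index bindex opsym)) →
    QTerm var varsort index bindex opsym → Prop where
  | var_some : ∀ {ρ xs x Y}, ρ xs x = some Y → QPSubst (.qVar xs x) ρ Y
  | var_none : ∀ {ρ xs x}, ρ xs x = none → QPSubst (.qVar xs x) ρ (.qVar xs x)
  | op : ∀ {ρ d inp binp inp' binp'},
      (∀ i, inp i = none ↔ inp' i = none) →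
      (∀ i X X', inp i = some X → inp' i = some X' → QPSubst X ρ X') →
      (∀ j, binp j = none ↔ binp' j = none) →
      (∀ j A A', binp j = some A → binp' j = some A' → QPSubstAbs A ρ A') →
      QPSubst (.qOp d inp binp) ρ (.qOp d inp' binp')
/-- The graph of capture-avoiding parallel substitution on quasiabstractions. -/
inductive QPSubstAbs : QAbs var varsort index bindex opsym →
    (varsort → var → Option (QTerm var varsort index bindex opsym)) →
    QAbs var varsort index bindex opsym → Prop where
  | abs : ∀ {ρ xs x X X'}, ρ xs x = none →
      (∀ ys y Y, ρ ys y = some Y → QFresh xs x Y) →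
      QPSubst X ρ X' → QPSubstAbs (.qAbs xs x X) ρ (.qAbs xs x X')
end

/-- Turning a term-valued assignment into a quasiterm-valued one, by picking
representatives. -/
noncomputable def qassign (ρ : varsort → var → Option (Term var varsort index bindex opsym)) :
    varsort → var → Option (QTerm var varsort index bindex opsym) :=
  fun xs x => (ρ xs x).map trep

/-- The graph of parallel substitution on terms. -/
def PSubstRel (X : Term var varsort index bindex opsym)
    (ρ : varsort → var → Option (Term var varsort index bindex opsym))
    (Z : Term var varsort index bindex opsym) : Prop :=
  ∃ qX qZ, tmk qX = X ∧ tmk qZ = Z ∧ QPSubst qX (qassign ρ) qZ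

/-- Capture-avoiding parallel substitution on terms: `psubst X ρ` is `X[ρ]`. -/
noncomputable def psubst (X : Term var varsort index bindex opsym)
    (ρ : varsort → var → Option (Term var varsort index bindex opsym)) :
    Term var varsort index bindex opsym :=
  if h : ∃ Z, PSubstRel X ρ Z then h.choose else X

/-- The graph of parallel substitution on abstractions. -/
def PSubstAbsRel (A : Abstr var varsort index bindex opsym)
    (ρ : varsort → var → Option (Term var varsort index bindex opsym))
    (B : Abstr var varsort index bindex opsym) : Prop :=
  ∃ qA qB, amk qA = A ∧ amk qB = B ∧ QPSubstAbs qA (qassign ρ) qB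

/-- Capture-avoiding parallel substitution on abstractions. -/
noncomputable def psubstAbs (A : Abstr var varsort index bindex opsym)
    (ρ : varsort → var → Option (Term var varsort index bindex opsym)) :
    Abstr var varsort index bindex opsym :=
  if h : ∃ B, PSubstAbsRel A ρ B then h.choose else A


/-!
Non-overlap and injectivity are read off a destructor: the outermost constructor of a
quasiterm, with its arguments taken in the quotient, is invariant under a single alpha step, so
it descends to `Term.head` on terms.

Exhaustiveness is harder: a good term is represented by its arguments only up to the
equivalence closure of alpha, which must be collapsed to alpha itself. By regularity of `|var|`,
a good quasiterm contains fewer than `|var|` variables, so fresh variables always exist; this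
gives reflexivity, while symmetry, equivariance under swapping and preservation of goodness hold
outright. Transitivity is by induction on the left quasiterm. Equivariance moves the induction
hypothesis from a body `P` to every swapped body `P[y ∧ a]`; choosing `y` outside all three
bodies, both abstraction steps can then be re-witnessed by `y`, because swapping `y` with a
variable that is fresh in a body `Q` is alpha-invisible on `Q`.
-/

open Cardinal

theorem Relation.EqvGen.iff_of_invariant {α : Type*} {r : α → α → Prop} {p : α → Prop}
    (hp : ∀ ⦃a b⦄, r a b → (p a ↔ p b)) {a b : α} (h : Relation.EqvGen r a b) :
    p a ↔ p b := by
  induction h with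
  | rel _ _ h => exact hp h
  | refl => rfl
  | symm _ _ _ ih => exact ih.symm
  | trans _ _ _ _ _ ih₁ ih₂ => exact ih₁.trans ih₂

theorem Relation.EqvGen.rel_of_invariant {α : Type*} {r : α → α → Prop} {p : α → Prop}
    (hp : ∀ ⦃a b⦄, r a b → (p a ↔ p b)) (refl : ∀ a, p a → r a a)
    (symm : ∀ ⦃a b⦄, r a b → r b a)
    (trans : ∀ a, p a → ∀ ⦃b c⦄, r a b → r b c → r a c)
    {a b : α} (h : Relation.EqvGen r a b) (ha : p a) : r a b := by
  induction h with
  | rel _ _ h => exact h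
  | refl a => exact refl a ha
  | symm a b hab ih => exact symm (ih ((hab.iff_of_invariant hp).2 ha))
  | trans a b c hab _ ih₁ ih₂ =>
    exact trans a ha (ih₁ ha) (ih₂ ((hab.iff_of_invariant hp).1 ha))

theorem mk_union_lt_of_aleph0_le {α : Type*} (h : ℵ₀ ≤ #α) {S T : Set α}
    (hS : #S < #α) (hT : #T < #α) : #(S ∪ T : Set α) < #α :=
  (mk_union_le S T).trans_lt (add_lt_of_lt h hS hT)

theorem mk_lt_of_finite_of_aleph0_le {α : Type*} (h : ℵ₀ ≤ #α) {S : Set α}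
    (hS : S.Finite) : #S < #α :=
  hS.lt_aleph0.trans_le h

theorem exists_notMem_of_mk_lt {α : Type*} (h : ℵ₀ ≤ #α) {S : Set α} (hS : #S < #α)
    (l : List α) : ∃ y, y ∉ S ∧ y ∉ l := by
  obtain ⟨y, hy⟩ := compl_nonempty_of_mk_lt_mk
    (mk_union_lt_of_aleph0_le h hS (mk_lt_of_finite_of_aleph0_le h (List.finite_toSet l)))
  exact ⟨y, fun h => hy (Or.inl h), fun h => hy (Or.inr h)⟩

section Inputs

variable {α β γ δ : Type u}

@[simp] theorem liftF_eq_none {f : β → γ} {inp : Input α β} {a : α} :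
    liftF f inp a = none ↔ inp a = none :=
  Option.map_eq_none_iff

theorem liftF_eq_some {f : β → γ} {inp : Input α β} {a : α} {c : γ} :
    liftF f inp a = some c ↔ ∃ b, inp a = some b ∧ f b = c :=
  Option.map_eq_some_iff

theorem liftF_liftF (f : β → γ) (g : γ → δ) (inp : Input α β) :
    liftF g (liftF f inp) = liftF (g ∘ f) inp := by
  funext a; simp [liftF, Option.map_map]

theorem liftF_eq_self {f : β → β} {inp : Input α β}
    (h : ∀ a b, inp a = some b → f b = b) :
    liftF f inp = inp := by
  funext a
  cases hb : inp a with
  | none => simp [liftF, hb]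
  | some b => simp [liftF, hb, h a b hb]

theorem liftF_id (inp : Input α β) : liftF id inp = inp :=
  liftF_eq_self fun _ _ _ => rfl

theorem exists_eq_some_of_none_iff {o : Option β} {o' : Option γ} (h : o = none ↔ o' = none)
    {b : β} (hb : o = some b) : ∃ c, o' = some c :=
  Option.ne_none_iff_exists'.1 fun hc => by simp [h.2 hc] at hb

theorem liftF_eq_liftF {f : β → δ} {g : γ → δ} {inp : Input α β} {inp' : Input α γ}
    (hdom : ∀ a, inp a = none ↔ inp' a = none)
    (h : ∀ a b c, inp a = some b → inp' a = some c → f b = g c) :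
    liftF f inp = liftF g inp' := by
  funext a
  cases hb : inp a with
  | none => simp [liftF, hb, (hdom a).1 hb]
  | some b =>
    obtain ⟨c, hc⟩ := exists_eq_some_of_none_iff (hdom a) hb
    simp [liftF, hb, hc, h a b c hb hc]

theorem idom_liftF (f : β → γ) (inp : Input α β) : idom (liftF f inp) = idom inp := by
  ext a; simp [idom]

theorem idom_eq_of_none_iff {inp : Input α β} {inp' : Input α γ}
    (h : ∀ a, inp a = none ↔ inp' a = none) : idom inp = idom inp' := by
  ext a; simp [idom, h a]

theorem mk_graph_le_mk_idom (inp : Input α β) :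
    #{p : α × β // inp p.1 = some p.2} ≤ #(idom inp) := by
  refine mk_le_of_injective (f := fun p => ⟨p.1.1, by simp [idom, p.2]⟩) ?_
  rintro ⟨⟨a, b⟩, hb⟩ ⟨⟨a', b'⟩, hb'⟩ h
  obtain rfl : a = a' := congrArg Subtype.val h
  obtain rfl : b = b' := Option.some_inj.1 (hb.symm.trans hb')
  rfl

end Inputs

theorem swapVarS_apply (zs xs : varsort) (z1 z2 x : var) :
    swapVarS var varsort zs xs z1 z2 x = if xs = zs then Equiv.swap z1 z2 x else x := by
  simp only [swapVarS, swapVar, Equiv.swap_apply_def]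

theorem swapVarS_involutive (zs xs : varsort) (z1 z2 : var) :
    Function.Involutive (swapVarS var varsort zs xs z1 z2) := by
  intro x
  simp only [swapVarS_apply]
  split_ifs <;> simp

theorem swapVarS_swapVarS (zs as xs : varsort) (u v a b x : var) :
    swapVarS var varsort zs xs u v (swapVarS var varsort as xs a b x) =
      swapVarS var varsort as xs (swapVarS var varsort zs as u v a)
        (swapVarS var varsort zs as u v b) (swapVarS var varsort zs xs u v x) := by
  simp only [swapVarS_apply]
  by_cases has : xs = as <;> by_cases hzs : xs = zs
  · subst has hzs
    simp [Equiv.swap_apply_apply]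
  all_goals simp_all

theorem qTerm_qAbs_induction {P : QTerm var varsort index bindex opsym → Prop}
    {Q : QAbs var varsort index bindex opsym → Prop}
    (qVar : ∀ xs x, P (.qVar xs x))
    (qOp : ∀ d inp binp, (∀ i X, inp i = some X → P X) →
      (∀ j A, binp j = some A → Q A) → P (.qOp d inp binp))
    (qAbs : ∀ xs x X, P X → Q (.qAbs xs x X)) :
    (∀ X, P X) ∧ (∀ A, Q A) := by
  refine ⟨fun X => ?_, fun A => ?_⟩
  · exact QTerm.rec (motive_1 := P) (motive_2 := Q)
      (motive_3 := fun o => ∀ X, o = some X → P X)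
      (motive_4 := fun o => ∀ A, o = some A → Q A)
      qVar (fun d inp binp h1 h2 => qOp d inp binp (fun i => h1 i) (fun j => h2 j))
      qAbs (fun X h => by cases h) (fun X hX Y h => by cases h; exact hX)
      (fun A h => by cases h) (fun A hA B h => by cases h; exact hA) X
  · exact QAbs.rec (motive_1 := P) (motive_2 := Q)
      (motive_3 := fun o => ∀ X, o = some X → P X)
      (motive_4 := fun o => ∀ A, o = some A → Q A)
      qVar (fun d inp binp h1 h2 => qOp d inp binp (fun i => h1 i) (fun j => h2 j))
      qAbs (fun X h => by cases h) (fun X hX Y h => by cases h; exact hX)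
      (fun A h => by cases h) (fun A hA B h => by cases h; exact hA) A

@[simp] theorem qSwap_qVar (z1 z2 : var) (zs xs : varsort) (x : var) :
    qSwap (index := index) (bindex := bindex) (opsym := opsym) z1 z2 zs (.qVar xs x) =
      .qVar xs (swapVarS var varsort zs xs z1 z2 x) := rfl

@[simp] theorem qSwap_qOp (z1 z2 : var) (zs : varsort) (d : opsym)
    (inp : Input index (QTerm var varsort index bindex opsym))
    (binp : Input bindex (QAbs var varsort index bindex opsym)) :
    qSwap z1 z2 zs (.qOp d inp binp) =
      .qOp d (liftF (qSwap z1 z2 zs) inp) (liftF (qSwapAbs z1 z2 zs) binp) := by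
  show QTerm.qOp d _ _ = _
  congr 1
  · funext i; cases h : inp i <;> simp [h, qSwap, liftF]
  · funext j; cases h : binp j with
    | none => simp [h, liftF]
    | some A => cases A; simp [h, qSwap, qSwapAbs, liftF]

@[simp] theorem qSwapAbs_qAbs (z1 z2 : var) (zs xs : varsort) (x : var)
    (X : QTerm var varsort index bindex opsym) :
    qSwapAbs z1 z2 zs (.qAbs xs x X) =
      .qAbs xs (swapVarS var varsort zs xs z1 z2 x) (qSwap z1 z2 zs X) := rfl

theorem qSwap_qSwapAbs_involutive (z1 z2 : var) (zs : varsort) :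
    Function.Involutive (qSwap (index := index) (bindex := bindex) (opsym := opsym) z1 z2 zs) ∧
    Function.Involutive
      (qSwapAbs (index := index) (bindex := bindex) (opsym := opsym) z1 z2 zs) := by
  refine qTerm_qAbs_induction ?_ ?_ ?_
  · intro xs x; simp [swapVarS_involutive zs xs z1 z2 x]
  · intro d inp binp ihX ihA
    simp only [qSwap_qOp, liftF_liftF]
    exact congrArg₂ (QTerm.qOp d) (liftF_eq_self ihX) (liftF_eq_self ihA)
  · intro xs x X ihX
    simp [swapVarS_involutive zs xs z1 z2 x, ihX]

theorem qSwap_qSwap_self (z1 z2 : var) (zs : varsort)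
    (X : QTerm var varsort index bindex opsym) :
    qSwap z1 z2 zs (qSwap z1 z2 zs X) = X :=
  (qSwap_qSwapAbs_involutive z1 z2 zs).1 X

theorem qSwap_qSwap_and_qSwapAbs_qSwapAbs (u v a b : var) (zs as : varsort) :
    (∀ X : QTerm var varsort index bindex opsym,
      qSwap u v zs (qSwap a b as X) =
        qSwap (swapVarS var varsort zs as u v a) (swapVarS var varsort zs as u v b) as
          (qSwap u v zs X)) ∧
    (∀ A : QAbs var varsort index bindex opsym,
      qSwapAbs u v zs (qSwapAbs a b as A) =
        qSwapAbs (swapVarS var varsort zs as u v a) (swapVarS var varsort zs as u v b) as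
          (qSwapAbs u v zs A)) := by
  refine qTerm_qAbs_induction ?_ ?_ ?_
  · intro xs x
    simp only [qSwap_qVar]
    rw [swapVarS_swapVarS]
  · intro d inp binp ihX ihA
    simp only [qSwap_qOp, liftF_liftF]
    congr 1
    · exact liftF_eq_liftF (fun _ => Iff.rfl) fun i X _ hX hX' => by
        cases hX.symm.trans hX'; exact ihX i X hX
    · exact liftF_eq_liftF (fun _ => Iff.rfl) fun j A _ hA hA' => by
        cases hA.symm.trans hA'; exact ihA j A hA
  · intro xs x X ihX
    simp only [qSwapAbs_qAbs, ihX]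
    rw [swapVarS_swapVarS]

theorem qSwap_qSwap (u v a b : var) (zs as : varsort)
    (X : QTerm var varsort index bindex opsym) :
    qSwap u v zs (qSwap a b as X) =
      qSwap (swapVarS var varsort zs as u v a) (swapVarS var varsort zs as u v b) as
        (qSwap u v zs X) :=
  (qSwap_qSwap_and_qSwapAbs_qSwapAbs u v a b zs as).1 X

theorem qSwap_qSwap_of_ne {y u w : var} (hwy : w ≠ y) (hwu : w ≠ u) (zs : varsort)
    (X : QTerm var varsort index bindex opsym) :
    qSwap y u zs (qSwap u w zs X) = qSwap y w zs (qSwap y u zs X) := by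
  rw [qSwap_qSwap]
  simp [swapVarS_apply, Equiv.swap_apply_of_ne_of_ne hwy hwu]

theorem qGood_qSwap_and_qGoodAbs_qSwapAbs (z1 z2 : var) (zs : varsort) :
    (∀ X : QTerm var varsort index bindex opsym, QGood X → QGood (qSwap z1 z2 zs X)) ∧
    (∀ A : QAbs var varsort index bindex opsym,
      QGoodAbs A → QGoodAbs (qSwapAbs z1 z2 zs A)) := by
  refine qTerm_qAbs_induction ?_ ?_ ?_
  · intro xs x _; exact QGood.qVar
  · intro d inp binp ihX ihA hg
    cases hg with | qOp hX hA hsX hsA =>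
    rw [qSwap_qOp]
    refine QGood.qOp ?_ ?_ (by rwa [smallDom, idom_liftF]) (by rwa [smallDom, idom_liftF])
    · intro i X h
      obtain ⟨X0, h0, rfl⟩ := liftF_eq_some.1 h
      exact ihX i X0 h0 (hX i X0 h0)
    · intro j A h
      obtain ⟨A0, h0, rfl⟩ := liftF_eq_some.1 h
      exact ihA j A0 h0 (hA j A0 h0)
  · rintro xs x X ihX ⟨hX⟩
    exact QGoodAbs.qAbs (ihX hX)

theorem qGood_qSwap_iff (z1 z2 : var) (zs : varsort)
    (X : QTerm var varsort index bindex opsym) :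
    QGood (qSwap z1 z2 zs X) ↔ QGood X := by
  refine ⟨fun h => ?_, (qGood_qSwap_and_qGoodAbs_qSwapAbs z1 z2 zs).1 X⟩
  simpa [qSwap_qSwap_self] using (qGood_qSwap_and_qGoodAbs_qSwapAbs z1 z2 zs).1 _ h

theorem qFresh_qSwap_and_qFreshAbs_qSwapAbs (u v : var) (zs : varsort) :
    (∀ X : QTerm var varsort index bindex opsym, ∀ ys y, QFresh ys y X →
      QFresh ys (swapVarS var varsort zs ys u v y) (qSwap u v zs X)) ∧
    (∀ A : QAbs var varsort index bindex opsym, ∀ ys y, QFreshAbs ys y A →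
      QFreshAbs ys (swapVarS var varsort zs ys u v y) (qSwapAbs u v zs A)) := by
  refine qTerm_qAbs_induction ?_ ?_ ?_
  · rintro xs x ys y ⟨hne⟩
    refine QFresh.qVar fun h => hne ?_
    obtain ⟨rfl, h⟩ := Prod.ext_iff.1 h
    rw [(swapVarS_involutive zs ys u v).injective h]
  · intro d inp binp ihX ihA ys y hf
    cases hf with | qOp hX hA =>
    rw [qSwap_qOp]
    refine QFresh.qOp ?_ ?_
    · intro i X h
      obtain ⟨X0, h0, rfl⟩ := liftF_eq_some.1 h
      exact ihX i X0 h0 ys y (hX i X0 h0)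
    · intro j A h
      obtain ⟨A0, h0, rfl⟩ := liftF_eq_some.1 h
      exact ihA j A0 h0 ys y (hA j A0 h0)
  · rintro xs x X ihX ys y (_ | ⟨hX⟩)
    · exact QFreshAbs.qAbs_bound
    · exact QFreshAbs.qAbs_body (ihX ys y hX)

theorem qFresh_qSwap {ys : varsort} {y : var} {X : QTerm var varsort index bindex opsym}
    (h : QFresh ys y X) (u v : var) (zs : varsort) :
    QFresh ys (swapVarS var varsort zs ys u v y) (qSwap u v zs X) :=
  (qFresh_qSwap_and_qFreshAbs_qSwapAbs u v zs).1 X ys y h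

mutual
inductive QOcc : varsort → var → QTerm var varsort index bindex opsym → Prop where
  | var : ∀ {xs x}, QOcc xs x (.qVar xs x)
  | op : ∀ {ys y d inp binp i X}, inp i = some X → QOcc ys y X → QOcc ys y (.qOp d inp binp)
  | opb : ∀ {ys y d inp binp j A}, binp j = some A → QOccAbs ys y A →
      QOcc ys y (.qOp d inp binp)
inductive QOccAbs : varsort → var → QAbs var varsort index bindex opsym → Prop where
  | bound : ∀ {xs x X}, QOccAbs xs x (.qAbs xs x X)
  | body : ∀ {ys y xs x X}, QOcc ys y X → QOccAbs ys y (.qAbs xs x X)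
end

def occSet (X : QTerm var varsort index bindex opsym) : Set var := {y | ∃ ys, QOcc ys y X}

def occSetAbs (A : QAbs var varsort index bindex opsym) : Set var := {y | ∃ ys, QOccAbs ys y A}

theorem qFresh_and_qFreshAbs_of_notMem_occSet :
    (∀ X : QTerm var varsort index bindex opsym, ∀ y, y ∉ occSet X → ∀ ys,
      QFresh ys y X) ∧
    (∀ A : QAbs var varsort index bindex opsym, ∀ y, y ∉ occSetAbs A → ∀ ys,
      QFreshAbs ys y A) := by
  refine qTerm_qAbs_induction ?_ ?_ ?_
  · intro xs x y hy ys
    refine QFresh.qVar fun h => hy ⟨ys, ?_⟩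
    obtain ⟨rfl, rfl⟩ := Prod.ext_iff.1 h
    exact QOcc.var
  · intro d inp binp ihX ihA y hy ys
    exact QFresh.qOp (fun i X h => ihX i X h y (fun ⟨zs, ho⟩ => hy ⟨zs, QOcc.op h ho⟩) ys)
      (fun j A h => ihA j A h y (fun ⟨zs, ho⟩ => hy ⟨zs, QOcc.opb h ho⟩) ys)
  · intro xs x X ihX y hy ys
    exact QFreshAbs.qAbs_body (ihX y (fun ⟨zs, ho⟩ => hy ⟨zs, QOccAbs.body ho⟩) ys)

theorem qFresh_of_notMem_occSet {X : QTerm var varsort index bindex opsym} {y : var}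
    (hy : y ∉ occSet X) (ys : varsort) : QFresh ys y X :=
  qFresh_and_qFreshAbs_of_notMem_occSet.1 X y hy ys

theorem qSwap_and_qSwapAbs_eq_self_of_notMem_occSet (y z : var) (zs : varsort) :
    (∀ X : QTerm var varsort index bindex opsym,
      y ∉ occSet X → z ∉ occSet X → qSwap y z zs X = X) ∧
    (∀ A : QAbs var varsort index bindex opsym,
      y ∉ occSetAbs A → z ∉ occSetAbs A → qSwapAbs y z zs A = A) := by
  refine qTerm_qAbs_induction ?_ ?_ ?_
  · intro xs x hy hz
    have hxy : x ≠ y := fun h => hy ⟨xs, h ▸ QOcc.var⟩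
    have hxz : x ≠ z := fun h => hz ⟨xs, h ▸ QOcc.var⟩
    simp [swapVarS_apply, Equiv.swap_apply_of_ne_of_ne hxy hxz]
  · intro d inp binp ihX ihA hy hz
    rw [qSwap_qOp]
    refine congrArg₂ (QTerm.qOp d) (liftF_eq_self fun i X h => ?_) (liftF_eq_self fun j A h => ?_)
    · exact ihX i X h (fun ⟨zs, ho⟩ => hy ⟨zs, QOcc.op h ho⟩)
        (fun ⟨zs, ho⟩ => hz ⟨zs, QOcc.op h ho⟩)
    · exact ihA j A h (fun ⟨zs, ho⟩ => hy ⟨zs, QOcc.opb h ho⟩)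
        (fun ⟨zs, ho⟩ => hz ⟨zs, QOcc.opb h ho⟩)
  · intro xs x X ihX hy hz
    have hxy : x ≠ y := fun h => hy ⟨xs, h ▸ QOccAbs.bound⟩
    have hxz : x ≠ z := fun h => hz ⟨xs, h ▸ QOccAbs.bound⟩
    have hX := ihX (fun ⟨zs, ho⟩ => hy ⟨zs, QOccAbs.body ho⟩)
      (fun ⟨zs, ho⟩ => hz ⟨zs, QOccAbs.body ho⟩)
    simp only [qSwapAbs_qAbs, swapVarS_apply, Equiv.swap_apply_of_ne_of_ne hxy hxz, ite_self, hX]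

theorem qSwap_eq_self_of_notMem_occSet {y z : var} {X : QTerm var varsort index bindex opsym}
    (hy : y ∉ occSet X) (hz : z ∉ occSet X) (zs : varsort) : qSwap y z zs X = X :=
  (qSwap_and_qSwapAbs_eq_self_of_notMem_occSet y z zs).1 X hy hz

theorem mk_occSet_lt_and_mk_occSetAbs_lt (hreg : (#var).IsRegular) :
    (∀ X : QTerm var varsort index bindex opsym, QGood X → #(occSet X) < #var) ∧
    (∀ A : QAbs var varsort index bindex opsym, QGoodAbs A → #(occSetAbs A) < #var) := by
  refine qTerm_qAbs_induction ?_ ?_ ?_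
  · intro xs x _
    refine (mk_le_mk_of_subset (t := {x}) ?_).trans_lt
      (mk_lt_of_finite_of_aleph0_le hreg.aleph0_le (Set.finite_singleton x))
    rintro y ⟨ys, ⟨⟩⟩
    rfl
  · intro d inp binp ihX ihA hg
    cases hg with | qOp hX hA hsX hsA =>
    have hsub : occSet (.qOp d inp binp) ⊆
        (⋃ p : {p : index × _ // inp p.1 = some p.2}, occSet p.1.2) ∪
          (⋃ p : {p : bindex × _ // binp p.1 = some p.2}, occSetAbs p.1.2) := by
      rintro y ⟨ys, ho⟩
      cases ho with
      | op h ho => exact Or.inl (Set.mem_iUnion.2 ⟨⟨(_, _), h⟩, ys, ho⟩)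
      | opb h ho => exact Or.inr (Set.mem_iUnion.2 ⟨⟨(_, _), h⟩, ys, ho⟩)
    refine (mk_le_mk_of_subset hsub).trans_lt (mk_union_lt_of_aleph0_le hreg.aleph0_le ?_ ?_)
    · refine (card_iUnion_lt_iff_forall_of_isRegular hreg
        ((mk_graph_le_mk_idom inp).trans_lt hsX)).2 fun p => ?_
      exact ihX p.1.1 p.1.2 p.2 (hX _ _ p.2)
    · refine (card_iUnion_lt_iff_forall_of_isRegular hreg
        ((mk_graph_le_mk_idom binp).trans_lt hsA)).2 fun p => ?_
      exact ihA p.1.1 p.1.2 p.2 (hA _ _ p.2)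
  · intro xs x X ihX hg
    cases hg with | qAbs hX =>
    have hsub : occSetAbs (.qAbs xs x X) ⊆ {x} ∪ occSet X := by
      rintro y ⟨ys, ho⟩
      cases ho with
      | bound => exact Or.inl rfl
      | body ho => exact Or.inr ⟨ys, ho⟩
    exact (mk_le_mk_of_subset hsub).trans_lt (mk_union_lt_of_aleph0_le hreg.aleph0_le
      (mk_lt_of_finite_of_aleph0_le hreg.aleph0_le (Set.finite_singleton x)) (ihX hX))

theorem mk_occSet_lt (hreg : (#var).IsRegular) {X : QTerm var varsort index bindex opsym}
    (hX : QGood X) : #(occSet X) < #var :=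
  (mk_occSet_lt_and_mk_occSetAbs_lt hreg).1 X hX

theorem alpha_alphaAbs_induction
    {P : QTerm var varsort index bindex opsym → QTerm var varsort index bindex opsym → Prop}
    {Q : QAbs var varsort index bindex opsym → QAbs var varsort index bindex opsym → Prop}
    (qVar : ∀ xs x, P (.qVar xs x) (.qVar xs x))
    (qOp : ∀ d inp binp inp' binp',
      (∀ i, inp i = none ↔ inp' i = none) → (∀ j, binp j = none ↔ binp' j = none) →
      (∀ i X X', inp i = some X → inp' i = some X' → P X X') →
      (∀ j A A', binp j = some A → binp' j = some A' → Q A A') →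
      P (.qOp d inp binp) (.qOp d inp' binp'))
    (qAbs : ∀ xs x x' X X' y, y ∉ ({x, x'} : Set var) → QFresh xs y X → QFresh xs y X' →
      P (qSwap y x xs X) (qSwap y x' xs X') → Q (.qAbs xs x X) (.qAbs xs x' X')) :
    (∀ X Y, Alpha X Y → P X Y) ∧ (∀ A B, AlphaAbs A B → Q A B) := by
  constructor
  · intro X Y h
    exact Alpha.rec (motive_1 := fun X Y _ => P X Y) (motive_2 := fun A B _ => Q A B)
      (qVar _ _) (fun h1 _ h3 _ ih1 ih2 => qOp _ _ _ _ _ h1 h3 ih1 ih2)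
      (fun hy hf1 hf2 _ ih => qAbs _ _ _ _ _ _ hy hf1 hf2 ih) h
  · intro A B h
    exact AlphaAbs.rec (motive_1 := fun X Y _ => P X Y) (motive_2 := fun A B _ => Q A B)
      (qVar _ _) (fun h1 _ h3 _ ih1 ih2 => qOp _ _ _ _ _ h1 h3 ih1 ih2)
      (fun hy hf1 hf2 _ ih => qAbs _ _ _ _ _ _ hy hf1 hf2 ih) h

theorem alpha_qOp_liftF
    {f f' : QTerm var varsort index bindex opsym → QTerm var varsort index bindex opsym}
    {g g' : QAbs var varsort index bindex opsym → QAbs var varsort index bindex opsym}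
    {d : opsym} {inp inp' : Input index (QTerm var varsort index bindex opsym)}
    {binp binp' : Input bindex (QAbs var varsort index bindex opsym)}
    (hinp : ∀ i, inp i = none ↔ inp' i = none) (hbinp : ∀ j, binp j = none ↔ binp' j = none)
    (hX : ∀ i X X', inp i = some X → inp' i = some X' → Alpha (f X) (f' X'))
    (hA : ∀ j A A', binp j = some A → binp' j = some A' → AlphaAbs (g A) (g' A')) :
    Alpha (.qOp d (liftF f inp) (liftF g binp)) (.qOp d (liftF f' inp') (liftF g' binp')) := by
  refine Alpha.qOp (by simpa using hinp) ?_ (by simpa using hbinp) ?_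
  · intro i X X' h h'
    obtain ⟨X0, h0, rfl⟩ := liftF_eq_some.1 h
    obtain ⟨X0', h0', rfl⟩ := liftF_eq_some.1 h'
    exact hX i X0 X0' h0 h0'
  · intro j A A' h h'
    obtain ⟨A0, h0, rfl⟩ := liftF_eq_some.1 h
    obtain ⟨A0', h0', rfl⟩ := liftF_eq_some.1 h'
    exact hA j A0 A0' h0 h0'

theorem alpha_qOp_liftF_self
    {f f' : QTerm var varsort index bindex opsym → QTerm var varsort index bindex opsym}
    {g g' : QAbs var varsort index bindex opsym → QAbs var varsort index bindex opsym}
    {d : opsym} {inp : Input index (QTerm var varsort index bindex opsym)}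
    {binp : Input bindex (QAbs var varsort index bindex opsym)}
    (hX : ∀ i X, inp i = some X → Alpha (f X) (f' X))
    (hA : ∀ j A, binp j = some A → AlphaAbs (g A) (g' A)) :
    Alpha (.qOp d (liftF f inp) (liftF g binp)) (.qOp d (liftF f' inp) (liftF g' binp)) :=
  alpha_qOp_liftF (fun _ => Iff.rfl) (fun _ => Iff.rfl)
    (fun i X _ h h' => by cases h.symm.trans h'; exact hX i X h)
    (fun j A _ h h' => by cases h.symm.trans h'; exact hA j A h)

theorem alpha_and_alphaAbs_symm :
    (∀ X Y : QTerm var varsort index bindex opsym, Alpha X Y → Alpha Y X) ∧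
    (∀ A B : QAbs var varsort index bindex opsym, AlphaAbs A B → AlphaAbs B A) := by
  refine alpha_alphaAbs_induction ?_ ?_ ?_
  · intro xs x; exact Alpha.qVar
  · intro d inp binp inp' binp' hinp hbinp ihX ihA
    exact Alpha.qOp (fun i => (hinp i).symm) (fun i X X' h h' => ihX i X' X h' h)
      (fun j => (hbinp j).symm) (fun j A A' h h' => ihA j A' A h' h)
  · intro xs x x' X X' y hy hX hX' ih
    exact AlphaAbs.qAbs (by simpa [or_comm] using hy) hX' hX ih

theorem Alpha.symm {X Y : QTerm var varsort index bindex opsym} (h : Alpha X Y) : Alpha Y X :=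
  alpha_and_alphaAbs_symm.1 X Y h

theorem alpha_and_alphaAbs_qSwap (u v : var) (zs : varsort) :
    (∀ X Y : QTerm var varsort index bindex opsym, Alpha X Y →
      Alpha (qSwap u v zs X) (qSwap u v zs Y)) ∧
    (∀ A B : QAbs var varsort index bindex opsym, AlphaAbs A B →
      AlphaAbs (qSwapAbs u v zs A) (qSwapAbs u v zs B)) := by
  refine alpha_alphaAbs_induction ?_ ?_ ?_
  · intro xs x; exact Alpha.qVar
  · intro d inp binp inp' binp' hinp hbinp ihX ihA
    simp only [qSwap_qOp]
    exact alpha_qOp_liftF hinp hbinp ihX ihA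
  · intro xs x x' X X' y hy hX hX' ih
    simp only [qSwapAbs_qAbs]
    refine AlphaAbs.qAbs (y := swapVarS var varsort zs xs u v y) ?_
      (qFresh_qSwap hX u v zs) (qFresh_qSwap hX' u v zs) ?_
    · have hinj := (swapVarS_involutive zs xs u v).injective
      simp only [Set.mem_insert_iff, Set.mem_singleton_iff] at hy ⊢
      exact fun h => hy (h.imp (@hinj _ _) (@hinj _ _))
    · rwa [qSwap_qSwap u v y x zs xs, qSwap_qSwap u v y x' zs xs] at ih

theorem Alpha.qSwap {X Y : QTerm var varsort index bindex opsym} (h : Alpha X Y)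
    (u v : var) (zs : varsort) : Alpha (qSwap u v zs X) (qSwap u v zs Y) :=
  (alpha_and_alphaAbs_qSwap u v zs).1 X Y h

theorem qGood_and_qGoodAbs_of_alpha :
    (∀ X Y : QTerm var varsort index bindex opsym, Alpha X Y → QGood X → QGood Y) ∧
    (∀ A B : QAbs var varsort index bindex opsym,
      AlphaAbs A B → QGoodAbs A → QGoodAbs B) := by
  refine alpha_alphaAbs_induction ?_ ?_ ?_
  · intro xs x h; exact h
  · intro d inp binp inp' binp' hinp hbinp ihX ihA hg
    cases hg with | qOp hX hA hsX hsA =>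
    refine QGood.qOp ?_ ?_ (by rwa [smallDom, ← idom_eq_of_none_iff hinp])
      (by rwa [smallDom, ← idom_eq_of_none_iff hbinp])
    · intro i X' h'
      obtain ⟨X, h⟩ := exists_eq_some_of_none_iff (hinp i).symm h'
      exact ihX i X X' h h' (hX i X h)
    · intro j A' h'
      obtain ⟨A, h⟩ := exists_eq_some_of_none_iff (hbinp j).symm h'
      exact ihA j A A' h h' (hA j A h)
  · rintro xs x x' X X' y - - - ih ⟨hX⟩
    exact QGoodAbs.qAbs ((qGood_qSwap_iff y x' xs X').1 (ih ((qGood_qSwap_iff y x xs X).2 hX)))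

theorem qGood_iff_of_alpha {X Y : QTerm var varsort index bindex opsym} (h : Alpha X Y) :
    QGood X ↔ QGood Y :=
  ⟨qGood_and_qGoodAbs_of_alpha.1 X Y h, qGood_and_qGoodAbs_of_alpha.1 Y X h.symm⟩

theorem qGoodAbs_iff_of_alphaAbs {A B : QAbs var varsort index bindex opsym} (h : AlphaAbs A B) :
    QGoodAbs A ↔ QGoodAbs B :=
  ⟨qGood_and_qGoodAbs_of_alpha.2 A B h,
    qGood_and_qGoodAbs_of_alpha.2 B A (alpha_and_alphaAbs_symm.2 A B h)⟩

theorem alpha_and_alphaAbs_refl (hreg : (#var).IsRegular) :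
    (∀ X : QTerm var varsort index bindex opsym, QGood X → Alpha X X) ∧
    (∀ A : QAbs var varsort index bindex opsym, QGoodAbs A → AlphaAbs A A) := by
  refine qTerm_qAbs_induction ?_ ?_ ?_
  · intro xs x _; exact Alpha.qVar
  · intro d inp binp ihX ihA hg
    cases hg with | qOp hX hA _ _ =>
    simpa only [liftF_id] using alpha_qOp_liftF_self (d := d) (f := id) (f' := id) (g := id)
      (g' := id) (fun i X h => ihX i X h (hX i X h)) (fun j A h => ihA j A h (hA j A h))
  · intro xs x X ihX hg
    cases hg with | qAbs hX =>
    obtain ⟨y, hyX, hyx⟩ := exists_notMem_of_mk_lt hreg.aleph0_le (mk_occSet_lt hreg hX) [x]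
    refine AlphaAbs.qAbs (y := y) (by simpa using hyx) (qFresh_of_notMem_occSet hyX xs)
      (qFresh_of_notMem_occSet hyX xs) ((ihX hX).qSwap y x xs)

theorem alpha_refl (hreg : (#var).IsRegular) {X : QTerm var varsort index bindex opsym}
    (hX : QGood X) : Alpha X X :=
  (alpha_and_alphaAbs_refl hreg).1 X hX

theorem alphaAbs_qAbs_of_alpha (hreg : (#var).IsRegular)
    {X X' : QTerm var varsort index bindex opsym} (hX : QGood X) (hX' : QGood X')
    (h : Alpha X X') (xs : varsort) (x : var) : AlphaAbs (.qAbs xs x X) (.qAbs xs x X') := by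
  obtain ⟨y, hy, hyx⟩ := exists_notMem_of_mk_lt hreg.aleph0_le
    (mk_union_lt_of_aleph0_le hreg.aleph0_le (mk_occSet_lt hreg hX) (mk_occSet_lt hreg hX')) [x]
  simp only [Set.mem_union, not_or] at hy
  exact AlphaAbs.qAbs (y := y) (by simpa using hyx) (qFresh_of_notMem_occSet hy.1 xs)
    (qFresh_of_notMem_occSet hy.2 xs) (h.qSwap y x xs)

theorem alphaAbs_qAbs_qSwap_of_notMem_occSet (hreg : (#var).IsRegular)
    {X : QTerm var varsort index bindex opsym} (hX : QGood X) {x y : var}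
    (hyX : y ∉ occSet X) (hyx : y ≠ x) (xs : varsort) :
    AlphaAbs (.qAbs xs y (qSwap y x xs X)) (.qAbs xs x X) := by
  obtain ⟨z, hzX, hz⟩ := exists_notMem_of_mk_lt hreg.aleph0_le (mk_occSet_lt hreg hX) [x, y]
  simp only [List.mem_cons, List.not_mem_nil, or_false, not_or] at hz
  have hzfresh : QFresh xs z (qSwap y x xs X) := by
    simpa [swapVarS_apply, Equiv.swap_apply_of_ne_of_ne hz.2 hz.1] using
      qFresh_qSwap (qFresh_of_notMem_occSet hzX xs) y x xs
  refine AlphaAbs.qAbs (y := z) (by simpa [or_comm] using hz) hzfresh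
    (qFresh_of_notMem_occSet hzX xs) ?_
  rw [qSwap_qSwap_of_ne (Ne.symm hz.1) hyx.symm, qSwap_eq_self_of_notMem_occSet hzX hyX]
  exact alpha_refl hreg ((qGood_qSwap_iff z x xs X).2 hX)

theorem alpha_and_alphaAbs_qSwap_of_notMem_occSet (hreg : (#var).IsRegular) :
    (∀ X : QTerm var varsort index bindex opsym, QGood X → ∀ y y' zs,
      y ∉ occSet X → QFresh zs y' X → Alpha (qSwap y y' zs X) X) ∧
    (∀ A : QAbs var varsort index bindex opsym, QGoodAbs A → ∀ y y' zs,
      y ∉ occSetAbs A → QFreshAbs zs y' A → AlphaAbs (qSwapAbs y y' zs A) A) := by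
  refine qTerm_qAbs_induction ?_ ?_ ?_
  · intro xs x _ y y' zs hy hy'
    cases hy' with | qVar hne =>
    have hxy : x ≠ y := fun h => hy ⟨xs, h ▸ QOcc.var⟩
    have hx : swapVarS var varsort zs xs y y' x = x := by
      rw [swapVarS_apply]
      split_ifs with h
      · subst h
        exact Equiv.swap_apply_of_ne_of_ne hxy fun h' => hne (by rw [h'])
      · rfl
    rw [qSwap_qVar, hx]
    exact Alpha.qVar
  · intro d inp binp ihX ihA hg y y' zs hy hy'
    cases hg with | qOp hX hA _ _ =>
    cases hy' with | qOp hX' hA' =>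
    have h := alpha_qOp_liftF_self (d := d) (f := qSwap y y' zs) (f' := id)
      (g := qSwapAbs y y' zs) (g' := id)
      (fun i X h => ihX i X h (hX i X h) y y' zs (fun ⟨ys, ho⟩ => hy ⟨ys, QOcc.op h ho⟩)
        (hX' i X h))
      (fun j A h => ihA j A h (hA j A h) y y' zs (fun ⟨ys, ho⟩ => hy ⟨ys, QOcc.opb h ho⟩)
        (hA' j A h))
    rwa [liftF_id, liftF_id, ← qSwap_qOp] at h
  · intro xs x X ihX hg y y' zs hy hy'
    cases hg with | qAbs hX =>
    have hyx : y ≠ x := fun h => hy ⟨xs, h ▸ QOccAbs.bound⟩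
    have hyX : y ∉ occSet X := fun ⟨ys, ho⟩ => hy ⟨ys, QOccAbs.body ho⟩
    by_cases hbound : zs = xs ∧ y' = x
    · obtain ⟨rfl, rfl⟩ := hbound
      simpa [swapVarS_apply] using alphaAbs_qAbs_qSwap_of_notMem_occSet hreg hX hyX hyx zs
    · have hy'X : QFresh zs y' X := by
        cases hy' with
        | qAbs_bound => exact absurd ⟨rfl, rfl⟩ hbound
        | qAbs_body h => exact h
      have hx : swapVarS var varsort zs xs y y' x = x := by
        rw [swapVarS_apply]
        split_ifs with h
        · exact Equiv.swap_apply_of_ne_of_ne hyx.symm fun h' => hbound ⟨h.symm, h'.symm⟩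
        · rfl
      rw [qSwapAbs_qAbs, hx]
      exact alphaAbs_qAbs_of_alpha hreg ((qGood_qSwap_iff y y' zs X).2 hX) hX
        (ihX hX y y' zs hyX hy'X) xs x

theorem alpha_qSwap_of_notMem_occSet (hreg : (#var).IsRegular)
    {X : QTerm var varsort index bindex opsym} (hX : QGood X) {y y' : var} {zs : varsort}
    (hy : y ∉ occSet X) (hy' : QFresh zs y' X) : Alpha (qSwap y y' zs X) X :=
  (alpha_and_alphaAbs_qSwap_of_notMem_occSet hreg).1 X hX y y' zs hy hy'

def AlphaTransAt (X : QTerm var varsort index bindex opsym) : Prop :=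
  ∀ ⦃Y Z⦄, Alpha X Y → Alpha Y Z → Alpha X Z

theorem alphaTransAt_qSwap {X : QTerm var varsort index bindex opsym} (h : AlphaTransAt X)
    (u v : var) (zs : varsort) : AlphaTransAt (qSwap u v zs X) := by
  intro Y Z hY hZ
  have hXY := hY.qSwap u v zs
  rw [qSwap_qSwap_self] at hXY
  simpa [qSwap_qSwap_self] using (h hXY (hZ.qSwap u v zs)).qSwap u v zs

/-- Re-witnessing an `AlphaAbs` step by a variable `y` occurring in neither body. -/
theorem alpha_qSwap_of_alphaAbs (hreg : (#var).IsRegular)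
    {X Q R : QTerm var varsort index bindex opsym} {xs : varsort} {b c y : var}
    (hT : AlphaTransAt X) (hXQ : Alpha X (qSwap y b xs Q))
    (hQR : AlphaAbs (.qAbs xs b Q) (.qAbs xs c R)) (hQ : QGood Q) (hR : QGood R)
    (hyQ : y ∉ occSet Q) (hyR : y ∉ occSet R) (hyb : y ≠ b) (hyc : y ≠ c) :
    Alpha X (qSwap y c xs R) := by
  cases hQR with | @qAbs _ _ _ _ _ y' hy' hy'Q hy'R h =>
  simp only [Set.mem_insert_iff, Set.mem_singleton_iff, not_or] at hy'
  have hQR' : Alpha (qSwap y b xs (qSwap y y' xs Q)) (qSwap y c xs (qSwap y y' xs R)) := by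
    have := h.qSwap y y' xs
    rwa [qSwap_qSwap_of_ne (Ne.symm hyb) (Ne.symm hy'.1),
      qSwap_qSwap_of_ne (Ne.symm hyc) (Ne.symm hy'.2)] at this
  have hQ' := (alpha_qSwap_of_notMem_occSet hreg hQ hyQ hy'Q).qSwap y b xs
  have hR' := (alpha_qSwap_of_notMem_occSet hreg hR hyR hy'R).qSwap y c xs
  exact hT (hT (hT hXQ hQ'.symm) hQR') hR'

theorem alphaTransAt_and_alphaAbs_trans (hreg : (#var).IsRegular) :
    (∀ X : QTerm var varsort index bindex opsym, QGood X → AlphaTransAt X) ∧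
    (∀ A : QAbs var varsort index bindex opsym, QGoodAbs A →
      ∀ ⦃B C⦄, AlphaAbs A B → AlphaAbs B C → AlphaAbs A C) := by
  refine qTerm_qAbs_induction ?_ ?_ ?_
  · rintro xs x - Y Z ⟨⟩ ⟨⟩
    exact Alpha.qVar
  · intro d inp binp ihX ihA hg Y Z hY hZ
    cases hg with | qOp hX hA _ _ =>
    cases hY with | qOp hinp hXY hbinp hAB =>
    cases hZ with | qOp hinp' hYZ hbinp' hBC =>
    refine Alpha.qOp (fun i => (hinp i).trans (hinp' i)) ?_
      (fun j => (hbinp j).trans (hbinp' j)) ?_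
    · intro i X Z h hZ
      obtain ⟨Y, hY⟩ := exists_eq_some_of_none_iff (hinp i) h
      exact ihX i X h (hX i X h) (hXY i X Y h hY) (hYZ i Y Z hY hZ)
    · intro j A C h hC
      obtain ⟨B, hB⟩ := exists_eq_some_of_none_iff (hbinp j) h
      exact ihA j A h (hA j A h) (hAB j A B h hB) (hBC j B C hB hC)
  · intro xs a P ihP hg B C hB hC
    have hgB := qGood_and_qGoodAbs_of_alpha.2 _ _ hB hg
    have hgC := qGood_and_qGoodAbs_of_alpha.2 _ _ hC hgB
    cases hg with | qAbs hP =>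
    cases hB with | @qAbs _ _ b _ Q y₁ hy₁ hP₁ hQ₁ h₁ =>
    cases hC with | @qAbs _ _ c _ R y₂ hy₂ hQ₂ hR₂ h₂ =>
    cases hgB with | qAbs hQ =>
    cases hgC with | qAbs hR =>
    have h₀ := hreg.aleph0_le
    obtain ⟨y, hy, hyabc⟩ := exists_notMem_of_mk_lt h₀ (mk_union_lt_of_aleph0_le h₀
      (mk_union_lt_of_aleph0_le h₀ (mk_occSet_lt hreg hP) (mk_occSet_lt hreg hQ))
      (mk_occSet_lt hreg hR)) [a, b, c]
    simp only [Set.mem_union, List.mem_cons, List.not_mem_nil, or_false, not_or] at hy hyabc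
    have hT := alphaTransAt_qSwap (ihP hP) y a xs
    refine AlphaAbs.qAbs (y := y) (by simpa using ⟨hyabc.1, hyabc.2.2⟩)
      (qFresh_of_notMem_occSet hy.1.1 xs) (qFresh_of_notMem_occSet hy.2 xs) ?_
    refine alpha_qSwap_of_alphaAbs hreg hT ?_ (AlphaAbs.qAbs hy₂ hQ₂ hR₂ h₂) hQ hR
      hy.1.2 hy.2 hyabc.2.1 hyabc.2.2
    exact alpha_qSwap_of_alphaAbs hreg hT (alpha_refl hreg ((qGood_qSwap_iff y a xs P).2 hP))
      (AlphaAbs.qAbs hy₁ hP₁ hQ₁ h₁) hP hQ hy.1.1 hy.1.2 hyabc.1 hyabc.2.1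

theorem good_tmk_iff {X : QTerm var varsort index bindex opsym} : good (tmk X) ↔ QGood X :=
  ((Quot.eq.1 (Quot.out_eq (tmk X)).symm).iff_of_invariant
    (fun _ _ h => qGood_iff_of_alpha h)).symm

theorem goodAbs_amk_iff {A : QAbs var varsort index bindex opsym} :
    goodAbs (amk A) ↔ QGoodAbs A :=
  ((Quot.eq.1 (Quot.out_eq (amk A)).symm).iff_of_invariant
    (fun _ _ h => qGoodAbs_iff_of_alphaAbs h)).symm

theorem alpha_trep_tmk (hreg : (#var).IsRegular) {X : QTerm var varsort index bindex opsym}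
    (hX : QGood X) : Alpha X (trep (tmk X)) :=
  (Quot.eq.1 (Quot.out_eq (tmk X)).symm).rel_of_invariant (fun _ _ h => qGood_iff_of_alpha h)
    (fun _ => alpha_refl hreg) (fun _ _ h => h.symm) (alphaTransAt_and_alphaAbs_trans hreg).1 hX

theorem alphaAbs_arep_amk (hreg : (#var).IsRegular) {A : QAbs var varsort index bindex opsym}
    (hA : QGoodAbs A) : AlphaAbs A (arep (amk A)) :=
  (Quot.eq.1 (Quot.out_eq (amk A)).symm).rel_of_invariant
    (fun _ _ h => qGoodAbs_iff_of_alphaAbs h) (alpha_and_alphaAbs_refl hreg).2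
    (alpha_and_alphaAbs_symm.2 · · ·) (alphaTransAt_and_alphaAbs_trans hreg).2 hA

theorem exists_eq_Var_or_Op_of_good (hreg : (#var).IsRegular)
    {X : Term var varsort index bindex opsym} (hX : good X) :
    (∃ xs x, X = Var xs x) ∨
      (∃ d inp binp, liftP good inp ∧ liftP goodAbs binp ∧
        smallDom var inp ∧ smallDom var binp ∧ X = Op d inp binp) := by
  obtain ⟨X, rfl⟩ := Quot.exists_rep X
  cases good_tmk_iff.1 hX with
  | qVar => exact .inl ⟨_, _, rfl⟩
  | @qOp d inp binp hinp hbinp hsinp hsbinp =>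
    refine .inr ⟨d, liftF tmk inp, liftF amk binp, ?_, ?_, by rwa [smallDom, idom_liftF],
      by rwa [smallDom, idom_liftF], Quot.sound ?_⟩
    · intro i _ h
      obtain ⟨X, hX, rfl⟩ := liftF_eq_some.1 h
      exact good_tmk_iff.2 (hinp i X hX)
    · intro j _ h
      obtain ⟨A, hA, rfl⟩ := liftF_eq_some.1 h
      exact goodAbs_amk_iff.2 (hbinp j A hA)
    · have h := alpha_qOp_liftF_self (d := d) (f := id) (f' := trep ∘ tmk) (g := id)
        (g' := arep ∘ amk) (fun i X h => alpha_trep_tmk hreg (hinp i X h))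
        (fun j A h => alphaAbs_arep_amk hreg (hbinp j A h))
      rwa [liftF_id, liftF_id, ← liftF_liftF, ← liftF_liftF] at h

theorem exists_eq_Abs_of_goodAbs (hreg : (#var).IsRegular)
    {A : Abstr var varsort index bindex opsym} (hA : goodAbs A) :
    ∃ xs x X, good X ∧ A = Abs xs x X := by
  obtain ⟨A, rfl⟩ := Quot.exists_rep A
  cases goodAbs_amk_iff.1 hA with | @qAbs xs x X hX =>
  exact ⟨xs, x, tmk X, good_tmk_iff.2 hX,
    Quot.sound (alphaAbs_qAbs_of_alpha hreg hX (good_tmk_iff.2 hX) (alpha_trep_tmk hreg hX) xs x)⟩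

noncomputable def qHead : QTerm var varsort index bindex opsym →
    (varsort × var) ⊕ (opsym × Input index (Term var varsort index bindex opsym) ×
      Input bindex (Abstr var varsort index bindex opsym))
  | .qVar xs x => .inl (xs, x)
  | .qOp d inp binp => .inr (d, liftF tmk inp, liftF amk binp)

theorem qHead_eq_of_alpha {X Y : QTerm var varsort index bindex opsym} (h : Alpha X Y) :
    qHead X = qHead Y := by
  cases h with
  | qVar => rfl
  | qOp hinp hXY hbinp hAB =>
    simp only [qHead, Sum.inr.injEq, Prod.mk.injEq, true_and]
    exact ⟨liftF_eq_liftF hinp fun i X Y h h' => Quot.sound (hXY i X Y h h'),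
      liftF_eq_liftF hbinp fun j A B h h' => Quot.sound (hAB j A B h h')⟩

noncomputable def Term.head : Term var varsort index bindex opsym →
    (varsort × var) ⊕ (opsym × Input index (Term var varsort index bindex opsym) ×
      Input bindex (Abstr var varsort index bindex opsym)) :=
  Quot.lift qHead fun _ _ => qHead_eq_of_alpha

@[simp] theorem Term.head_Var (xs : varsort) (x : var) :
    (Var xs x : Term var varsort index bindex opsym).head = .inl (xs, x) := rfl

@[simp] theorem Term.head_Op (d : opsym) (inp : Input index (Term var varsort index bindex opsym))
    (binp : Input bindex (Abstr var varsort index bindex opsym)) :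
    (Op d inp binp).head = .inr (d, inp, binp) := by
  show qHead (.qOp d (liftF trep inp) (liftF arep binp)) = _
  simp only [qHead, liftF_liftF]
  rw [liftF_eq_self (f := tmk ∘ trep) fun _ X _ => Quot.out_eq X,
    liftF_eq_self (f := amk ∘ arep) fun _ A _ => Quot.out_eq A]

/-- `Var` and `Op` behave like free constructors on (good) terms:
exhaustiveness, injectivity and non-overlapping. -/
theorem constructors_free (hinf : Cardinal.aleph0 ≤ Cardinal.mk var)
    (hreg : (Cardinal.mk var).IsRegular) :
    -- (1) exhaustiveness
    ((∀ X : Term var varsort index bindex opsym, good X →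
        (∃ xs x, X = Var xs x) ∨
        (∃ d inp binp, liftP good inp ∧ liftP goodAbs binp ∧
          smallDom var inp ∧ smallDom var binp ∧ X = Op d inp binp)) ∧
     (∀ A : Abstr var varsort index bindex opsym, goodAbs A →
        ∃ xs x X, good X ∧ A = Abs xs x X)) ∧
    -- (2) injectivity of Var
    (∀ xs xs' : varsort, ∀ x x' : var,
      (Var xs x : Term var varsort index bindex opsym) = Var xs' x' → xs = xs' ∧ x = x') ∧
    -- (3) injectivity of Op on good inputs
    (∀ d d' : opsym, ∀ inp inp' : Input index (Term var varsort index bindex opsym),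
      ∀ binp binp' : Input bindex (Abstr var varsort index bindex opsym),
      liftP good inp → liftP goodAbs binp → smallDom var inp → smallDom var binp →
      liftP good inp' → liftP goodAbs binp' → smallDom var inp' → smallDom var binp' →
      Op d inp binp = Op d' inp' binp' → d = d' ∧ inp = inp' ∧ binp = binp') ∧
    -- (4) Var and Op do not overlap
    (∀ xs : varsort, ∀ x : var, ∀ d : opsym, ∀ inp : Input index (Term var varsort index bindex opsym),
      ∀ binp : Input bindex (Abstr var varsort index bindex opsym), Var xs x ≠ Op d inp binp) := by
  refine ⟨⟨fun X => exists_eq_Var_or_Op_of_good hreg, fun A => exists_eq_Abs_of_goodAbs hreg⟩,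
    ?_, ?_, ?_⟩
  · intro xs xs' x x' h
    simpa using congrArg Term.head h
  · intro d d' inp inp' binp binp' _ _ _ _ _ _ _ _ h
    simpa using congrArg Term.head h
  · intro xs x d inp binp h
    simpa using congrArg Term.head h

end Binding
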